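/- arXiv:math/0610597 — 4 statements merged into one kernel-verified Lean document; each statement's English description precedes it below -/
import Mathlib

section
/- For nonnegative even integer s, the Gaussian integral over ℝ^l of e^{-‖z‖²} times the product (b₁ᵀz)(b₂ᵀz)⋯(b_sᵀz) equals π^{l/2}/(2^s (s/2)!) times the sum over all permutations σ of {1,…,s} of the product (b_{σ(1)}ᵀ b_{σ(2)})⋯(b_{σ(s-1)}ᵀ b_{σ(s)}). -/
/-!
Averaging over the sign vectors `ε ∈ {±1}ˢ` polarizes a product of `s` numbers into `s`-th powers,
`2ˢ s! ∏ xᵢ = ∑_ε (∏ εᵢ) (∑ εᵢ xᵢ)ˢ`, since `∏ εᵢ · ∏ⱼ ε_{f j}` averages to zero unless `f` is a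
permutation. The same averaging turns `⟪w_ε, w_ε⟫^(s/2)`, `w_ε = ∑ εᵢ bᵢ`, into `2ˢ` times the sum
over permutations of products of pairings. For a single vector, a reflection moves `w` onto a
coordinate axis, and Fubini reduces `∫ e^{-‖z‖²} ⟪w, z⟫ˢ` to one-dimensional Gamma integrals:
it equals `π^{l/2} (s-1)‼ / 2^{s/2} ‖w‖ˢ`. Combining the three identities with
`s! = (s-1)‼ 2^{s/2} (s/2)!` gives the formula.
-/

open MeasureTheory Finset Real Module
open scoped Nat RealInnerProductSpace

section Pairs

variable {s : ℕ}

def finHalfProdFinTwoEquiv (hs : Even s) : Fin (s / 2) × Fin 2 ≃ Fin s :=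
  finProdFinEquiv.trans (finCongr (by have := Nat.even_iff.1 hs; omega))

@[simp]
theorem finHalfProdFinTwoEquiv_apply_val (hs : Even s) (p : Fin (s / 2) × Fin 2) :
    (finHalfProdFinTwoEquiv hs p : ℕ) = 2 * p.1 + p.2 := by
  simp [finHalfProdFinTwoEquiv, add_comm]

theorem Fin.prod_univ_eq_prod_pairs {M : Type*} [CommMonoid M] (hs : Even s) (g : Fin s → M) :
    ∏ j, g j = ∏ k : Fin (s / 2),
      g ⟨2 * k, by have := k.isLt; omega⟩ * g ⟨2 * k + 1, by have := k.isLt; omega⟩ := by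
  rw [← (finHalfProdFinTwoEquiv hs).prod_comp, Fintype.prod_prod_type]
  refine prod_congr rfl fun k _ => ?_
  rw [Fin.prod_univ_two]
  congr <;> ext <;> simp

def finArrowEquivPairs (hs : Even s) (α : Type*) : (Fin s → α) ≃ (Fin (s / 2) → α × α) :=
  ((finHalfProdFinTwoEquiv hs).arrowCongr (Equiv.refl α)).symm.trans <|
    (Equiv.curry _ _ _).trans <| Equiv.arrowCongr (Equiv.refl _) (finTwoArrowEquiv α)

@[simp]
theorem finArrowEquivPairs_apply (hs : Even s) {α : Type*} (f : Fin s → α) (k : Fin (s / 2)) :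
    finArrowEquivPairs hs α f k
      = (f ⟨2 * k, by have := k.isLt; omega⟩, f ⟨2 * k + 1, by have := k.isLt; omega⟩) := by
  simp [finArrowEquivPairs]
  constructor <;> congr <;> ext <;> simp

end Pairs

section SignAveraging

variable {R : Type*} [CommRing R] {ι : Type*} [Fintype ι] [DecidableEq ι]

theorem UnitsInt.sum_cast_pow (n : ℕ) :
    ∑ u : ℤˣ, ((u : ℤ) : R) ^ n = if Even n then 2 else 0 := by
  rcases Nat.even_or_odd n with h | h
  · simp [UnitsInt.univ, h, h.neg_one_pow, one_add_one_eq_two]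
  · simp [UnitsInt.univ, h.neg_one_pow, Nat.not_even_iff_odd.2 h]

theorem sum_prod_units_int_cast_pow (n : ι → ℕ) :
    ∑ ε : ι → ℤˣ, ∏ i, ((ε i : ℤ) : R) ^ n i
      = if ∀ i, Even (n i) then 2 ^ Fintype.card ι else 0 := by
  rw [← Fintype.prod_sum (fun i (u : ℤˣ) => ((u : ℤ) : R) ^ n i)]
  simp_rw [UnitsInt.sum_cast_pow, Fintype.prod_ite_zero, prod_const, card_univ]

theorem Fintype.bijective_iff_forall_odd_card_fiber (f : ι → ι) :
    Function.Bijective f ↔ ∀ i, Odd (Fintype.card {j // f j = i}) := by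
  refine ⟨fun hf i => ?_, fun h => Finite.surjective_iff_bijective.1 fun i => ?_⟩
  · obtain ⟨j, hj, huniq⟩ := hf.existsUnique i
    have : Fintype.card {j // f j = i} = 1 :=
      Fintype.card_eq_one_iff.2 ⟨⟨j, hj⟩, fun k => Subtype.ext (huniq k k.2)⟩
    simp [this]
  · obtain ⟨⟨j, hj⟩⟩ := Fintype.card_pos_iff.1 (h i).pos
    exact ⟨j, hj⟩

theorem sum_units_int_prod_mul_prod_comp (f : ι → ι) :
    ∑ ε : ι → ℤˣ, (∏ i, ((ε i : ℤ) : R)) * ∏ j, ((ε (f j) : ℤ) : R)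
      = if Function.Bijective f then 2 ^ Fintype.card ι else 0 := by
  have hfiber : ∀ ε : ι → ℤˣ, (∏ i, ((ε i : ℤ) : R)) * ∏ j, ((ε (f j) : ℤ) : R)
      = ∏ i, ((ε i : ℤ) : R) ^ (Fintype.card {j // f j = i} + 1) := by
    intro ε
    rw [← Fintype.prod_fiberwise' f (fun i => ((ε i : ℤ) : R)), ← prod_mul_distrib]
    simp [pow_succ']
  simp_rw [hfiber, sum_prod_units_int_cast_pow, Nat.even_add_one, Nat.not_even_iff_odd,
    Fintype.bijective_iff_forall_odd_card_fiber]

theorem sum_units_int_prod_mul_sum_prod_comp (F : (ι → ι) → R) :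
    ∑ ε : ι → ℤˣ, (∏ i, ((ε i : ℤ) : R)) * ∑ f : ι → ι, (∏ j, ((ε (f j) : ℤ) : R)) * F f
      = 2 ^ Fintype.card ι * ∑ σ : Equiv.Perm ι, F σ := by
  simp_rw [mul_sum, ← mul_assoc]
  rw [sum_comm]
  simp_rw [← sum_mul, sum_units_int_prod_mul_prod_comp, ite_mul, zero_mul]
  rw [← sum_filter]
  refine (sum_bij (fun (σ : Equiv.Perm ι) _ => ⇑σ) (by simp)
    (fun _ _ _ _ h => DFunLike.coe_injective h)
    (fun f hf => ⟨Equiv.ofBijective f (by simpa using hf), mem_univ _, rfl⟩)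
    (fun _ _ => rfl)).symm

theorem sum_units_int_prod_mul_sum_pow {n : ℕ} (x : Fin n → R) :
    ∑ ε : Fin n → ℤˣ, (∏ i, ((ε i : ℤ) : R)) * (∑ i, ((ε i : ℤ) : R) * x i) ^ n
      = 2 ^ n * n ! * ∏ i, x i := by
  simp_rw [Fintype.sum_pow, prod_mul_distrib]
  rw [sum_units_int_prod_mul_sum_prod_comp]
  simp_rw [Equiv.prod_comp]
  simp [Fintype.card_perm, mul_assoc]

theorem sum_units_int_prod_mul_bilin_pow {M : Type*} [AddCommGroup M] [Module R M]
    (B : M →ₗ[R] M →ₗ[R] R) {s : ℕ} (hs : Even s) (b : Fin s → M) :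
    ∑ ε : Fin s → ℤˣ, (∏ i, ((ε i : ℤ) : R)) *
        B (∑ i, ((ε i : ℤ) : R) • b i) (∑ i, ((ε i : ℤ) : R) • b i) ^ (s / 2)
      = 2 ^ s * ∑ σ : Equiv.Perm (Fin s), ∏ k : Fin (s / 2),
          B (b (σ ⟨2 * k, by have := k.isLt; omega⟩))
            (b (σ ⟨2 * k + 1, by have := k.isLt; omega⟩)) := by
  have expand : ∀ ε : Fin s → ℤˣ,
      B (∑ i, ((ε i : ℤ) : R) • b i) (∑ i, ((ε i : ℤ) : R) • b i) ^ (s / 2)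
        = ∑ f : Fin s → Fin s, (∏ j, ((ε (f j) : ℤ) : R)) * ∏ k : Fin (s / 2),
            B (b (f ⟨2 * k, by have := k.isLt; omega⟩))
              (b (f ⟨2 * k + 1, by have := k.isLt; omega⟩)) := by
    intro ε
    have hB : B (∑ i, ((ε i : ℤ) : R) • b i) (∑ i, ((ε i : ℤ) : R) • b i)
        = ∑ p : Fin s × Fin s,
            ((ε p.1 : ℤ) : R) * ((ε p.2 : ℤ) : R) * B (b p.1) (b p.2) := by
      simp only [map_sum, map_smul, LinearMap.sum_apply, LinearMap.smul_apply, smul_eq_mul,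
        Fintype.sum_prod_type, mul_sum, mul_assoc]
      rw [sum_comm]
      simp only [mul_left_comm]
    rw [hB, Fintype.sum_pow, ← (finArrowEquivPairs hs _).sum_comp]
    refine sum_congr rfl fun f _ => ?_
    simp only [finArrowEquivPairs_apply, prod_mul_distrib, Fin.prod_univ_eq_prod_pairs hs]
  simp_rw [expand]
  rw [sum_units_int_prod_mul_sum_prod_comp, Fintype.card_fin]
end SignAveraging

theorem Nat.factorial_eq_doubleFactorial_mul_of_even {n : ℕ} (hn : Even n) :
    n ! = (n - 1)‼ * 2 ^ (n / 2) * (n / 2)! := by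
  obtain ⟨m, rfl⟩ := hn
  rw [← two_mul, Nat.mul_div_cancel_left _ two_pos]
  cases m with
  | zero => rfl
  | succ m =>
    rw [show 2 * (m + 1) - 1 = 2 * m + 1 by omega, show 2 * (m + 1) = 2 * m + 1 + 1 by ring,
      Nat.factorial_eq_mul_doubleFactorial, show 2 * m + 1 + 1 = 2 * (m + 1) by ring,
      Nat.doubleFactorial_two_mul]
    ring

theorem integrable_exp_neg_sq_mul_pow (n : ℕ) : Integrable fun x : ℝ => exp (-x ^ 2) * x ^ n := by
  have h := integrable_rpow_mul_exp_neg_mul_sq (b := 1) one_pos (s := n)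
    (by linarith [n.cast_nonneg (α := ℝ)])
  simpa [mul_comm] using h

theorem integral_exp_neg_sq_mul_pow_of_even {n : ℕ} (hn : Even n) :
    ∫ x : ℝ, exp (-x ^ 2) * x ^ n = √π * (n - 1)‼ / 2 ^ (n / 2) := by
  calc ∫ x : ℝ, exp (-x ^ 2) * x ^ n
      = 2 * ∫ x in Set.Ioi 0, x ^ (n : ℝ) * exp (-x ^ (2 : ℝ)) := by
        rw [← integral_comp_abs]
        congr with x
        rw [rpow_natCast, rpow_two, sq_abs, hn.pow_abs, mul_comm]
    _ = Gamma ((n / 2 : ℕ) + 1 / 2) := by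
        rw [integral_rpow_mul_exp_neg_rpow two_pos (by linarith [n.cast_nonneg (α := ℝ)])]
        obtain ⟨m, rfl⟩ := hn
        rw [← two_mul, Nat.mul_div_cancel_left _ two_pos]
        push_cast
        ring_nf
    _ = _ := by
        rw [Gamma_nat_add_half, Nat.mul_div_cancel' (even_iff_two_dvd.1 hn)]
        ring

theorem Real.sqrt_pow_eq_rpow {x : ℝ} (hx : 0 ≤ x) (n : ℕ) : √x ^ n = x ^ ((n : ℝ) / 2) := by
  rw [sqrt_eq_rpow, ← rpow_natCast, ← rpow_mul hx, one_div_mul_eq_div]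

namespace EuclideanSpace

variable {ι : Type*} [Fintype ι]

theorem integral_exp_neg_norm_sq_mul_prod (g : ι → ℝ → ℝ) :
    ∫ x : EuclideanSpace ℝ ι, exp (-‖x‖ ^ 2) * ∏ i, g i (x i)
      = ∏ i, ∫ t : ℝ, exp (-t ^ 2) * g i t := by
  rw [← (PiLp.volume_preserving_toLp ι).integral_comp
    (MeasurableEquiv.toLp 2 _).measurableEmbedding, ← integral_fintype_prod_volume_eq_prod]
  congr with y
  simp [EuclideanSpace.norm_sq_eq, ← exp_sum, prod_mul_distrib]

theorem integrable_exp_neg_norm_sq_mul_prod {g : ι → ℝ → ℝ}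
    (hg : ∀ i, Integrable fun t : ℝ => exp (-t ^ 2) * g i t) :
    Integrable fun x : EuclideanSpace ℝ ι => exp (-‖x‖ ^ 2) * ∏ i, g i (x i) := by
  rw [← (PiLp.volume_preserving_toLp ι).integrable_comp_emb
    (MeasurableEquiv.toLp 2 _).measurableEmbedding]
  convert Integrable.fintype_prod hg using 2 with y
  · simp [EuclideanSpace.norm_sq_eq, ← exp_sum, prod_mul_distrib]
  · exact volume_pi

theorem integral_exp_neg_norm_sq_mul_apply_pow (i₀ : ι) {n : ℕ} (hn : Even n) :
    Integrable (fun x : EuclideanSpace ℝ ι => exp (-‖x‖ ^ 2) * x i₀ ^ n) ∧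
      ∫ x : EuclideanSpace ℝ ι, exp (-‖x‖ ^ 2) * x i₀ ^ n
        = π ^ ((Fintype.card ι : ℝ) / 2) * (n - 1)‼ / 2 ^ (n / 2) := by
  classical
  set g : ι → ℝ → ℝ := fun i t => if i = i₀ then t ^ n else 1
  have hprod : ∀ x : EuclideanSpace ℝ ι, ∏ i, g i (x i) = x i₀ ^ n := fun x => by
    simp [g, prod_ite_eq']
  have hg : ∀ i, ∫ t : ℝ, exp (-t ^ 2) * g i t
      = √π * if i = i₀ then ((n - 1)‼ / 2 ^ (n / 2) : ℝ) else 1 := by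
    intro i
    split_ifs with hi
    · simp [g, hi, integral_exp_neg_sq_mul_pow_of_even hn, mul_div_assoc]
    · simpa [g, hi] using integral_exp_neg_sq_mul_pow_of_even Even.zero
  simp_rw [← hprod]
  refine ⟨integrable_exp_neg_norm_sq_mul_prod fun i => ?_, ?_⟩
  · by_cases hi : i = i₀
    · simpa [g, hi] using integrable_exp_neg_sq_mul_pow n
    · simpa [g, hi] using integrable_exp_neg_sq_mul_pow 0
  · rw [integral_exp_neg_norm_sq_mul_prod, prod_congr rfl fun i _ => hg i, prod_mul_distrib,
      prod_const, prod_ite_eq', if_pos (mem_univ _), card_univ, sqrt_pow_eq_rpow pi_pos.le,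
      mul_div_assoc]

end EuclideanSpace

section InnerProductSpace

variable {V : Type*} [NormedAddCommGroup V] [InnerProductSpace ℝ V] [FiniteDimensional ℝ V]

theorem exists_linearIsometryEquiv_inner_eq (w : V) (i₀ : Fin (finrank ℝ V)) :
    ∃ S : EuclideanSpace ℝ (Fin (finrank ℝ V)) ≃ₗᵢ[ℝ] V, ∀ x, ⟪w, S x⟫ = ‖w‖ * x i₀ := by
  set B := stdOrthonormalBasis ℝ V
  set u := ‖w‖ • B i₀
  have hu : ‖w‖ = ‖u‖ := by simp [u, norm_smul, B.orthonormal.1 i₀]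
  set T := (ℝ ∙ (w - u))ᗮ.reflection
  have hTw : T w = u := Submodule.reflection_sub hu
  refine ⟨B.repr.symm.trans T, fun x => ?_⟩
  calc ⟪w, T (B.repr.symm x)⟫ = ⟪T w, B.repr.symm x⟫ := by
        rw [← T.inner_map_map w, Submodule.reflection_reflection]
    _ = ‖w‖ * x i₀ := by
        rw [hTw, real_inner_smul_left, ← B.repr_apply_apply, LinearIsometryEquiv.apply_symm_apply]

variable [MeasurableSpace V] [BorelSpace V]

theorem integral_exp_neg_norm_sq_mul_inner_pow (w : V) {n : ℕ} (hn : Even n) :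
    Integrable (fun z : V => exp (-‖z‖ ^ 2) * ⟪w, z⟫ ^ n) ∧
      ∫ z : V, exp (-‖z‖ ^ 2) * ⟪w, z⟫ ^ n
        = π ^ ((finrank ℝ V : ℝ) / 2) * (n - 1)‼ / 2 ^ (n / 2) * ‖w‖ ^ n := by
  rcases eq_or_ne w 0 with rfl | hw
  · have hG : ∫ z : V, exp (-‖z‖ ^ 2) = π ^ ((finrank ℝ V : ℝ) / 2) := by
      simpa using GaussianFourier.integral_rexp_neg_mul_sq_norm (V := V) one_pos
    have hGi : Integrable fun z : V => exp (-‖z‖ ^ 2) :=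
      .of_integral_ne_zero (by rw [hG]; positivity)
    rcases n.eq_zero_or_pos with rfl | hn0
    · simp [hG, hGi]
    · simp [zero_pow hn0.ne']
  · have hd : 0 < finrank ℝ V := finrank_pos_iff_exists_ne_zero.2 ⟨w, hw⟩
    obtain ⟨S, hS⟩ := exists_linearIsometryEquiv_inner_eq w ⟨0, hd⟩
    have hcomp : ∀ x, exp (-‖S x‖ ^ 2) * ⟪w, S x⟫ ^ n
        = ‖w‖ ^ n * (exp (-‖x‖ ^ 2) * x ⟨0, hd⟩ ^ n) := fun x => by
      rw [hS, S.norm_map, mul_pow]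
      ring
    obtain ⟨hint, hval⟩ := EuclideanSpace.integral_exp_neg_norm_sq_mul_apply_pow
      (⟨0, hd⟩ : Fin (finrank ℝ V)) hn
    rw [← S.measurePreserving.integrable_comp_emb S.toHomeomorph.measurableEmbedding,
      ← S.measurePreserving.integral_comp S.toHomeomorph.measurableEmbedding]
    simp only [Function.comp_def, hcomp]
    refine ⟨hint.const_mul _, ?_⟩
    rw [integral_const_mul, hval, Fintype.card_fin]
    ring

theorem integral_exp_neg_norm_sq_mul_prod_inner {s : ℕ} (hs : Even s) (b : Fin s → V) :
    ∫ z : V, exp (-‖z‖ ^ 2) * ∏ i, ⟪b i, z⟫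
      = π ^ ((finrank ℝ V : ℝ) / 2) / (2 ^ s * (s / 2)!) *
        ∑ σ : Equiv.Perm (Fin s), ∏ k : Fin (s / 2),
          ⟪b (σ ⟨2 * k, by have := k.isLt; omega⟩),
            b (σ ⟨2 * k + 1, by have := k.isLt; omega⟩)⟫ := by
  set w : (Fin s → ℤˣ) → V := fun ε => ∑ i, ((ε i : ℤ) : ℝ) • b i
  set c : (Fin s → ℤˣ) → ℝ := fun ε => ∏ i, ((ε i : ℤ) : ℝ)
  have hpolar : ∀ z : V,
      ∏ i, ⟪b i, z⟫ = ((2 ^ s * s ! : ℝ))⁻¹ * ∑ ε, c ε * ⟪w ε, z⟫ ^ s := fun z => by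
    have hw : ∀ ε, ⟪w ε, z⟫ = ∑ i, ((ε i : ℤ) : ℝ) * ⟪b i, z⟫ := fun ε => by
      simp [w, sum_inner, real_inner_smul_left]
    simp_rw [c, hw, sum_units_int_prod_mul_sum_pow]
    field_simp
  have hmoment := fun ε => integral_exp_neg_norm_sq_mul_inner_pow (w ε) hs
  set K := π ^ ((finrank ℝ V : ℝ) / 2) * (s - 1)‼ / 2 ^ (s / 2)
  calc ∫ z : V, exp (-‖z‖ ^ 2) * ∏ i, ⟪b i, z⟫
      = ∫ z : V, ∑ ε, ((2 ^ s * s ! : ℝ))⁻¹ * c ε * (exp (-‖z‖ ^ 2) * ⟪w ε, z⟫ ^ s) := by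
        congr with z
        rw [hpolar, mul_sum, mul_sum]
        congr with ε
        ring
    _ = ∑ ε, ((2 ^ s * s ! : ℝ))⁻¹ * c ε * (K * ‖w ε‖ ^ s) := by
        rw [integral_finsetSum _ fun ε _ => (hmoment ε).1.const_mul _]
        simp_rw [integral_const_mul, (hmoment _).2]
    _ = ((2 ^ s * s ! : ℝ))⁻¹ * K * ∑ ε, c ε * innerₗ V (w ε) (w ε) ^ (s / 2) := by
        rw [mul_sum]
        congr with ε
        rw [innerₗ_apply_apply, real_inner_self_eq_norm_sq, ← pow_mul,
          Nat.mul_div_cancel' hs.two_dvd]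
        ring
    _ = _ := by
        rw [sum_units_int_prod_mul_bilin_pow (innerₗ V) hs b]
        simp only [innerₗ_apply_apply, K]
        rw [Nat.factorial_eq_doubleFactorial_mul_of_even hs]
        push_cast
        field_simp
        rw [← pow_mul, Nat.div_mul_cancel hs.two_dvd]

end InnerProductSpace

/-- Wick (Isserlis) formula for even `s`. -/
theorem wick_formula_even (l s : ℕ) (hs : s % 2 = 0)
    (b : Fin s → EuclideanSpace ℝ (Fin l)) :
    ∫ z : EuclideanSpace ℝ (Fin l),
        Real.exp (-‖z‖ ^ 2) * ∏ i, (inner ℝ (b i) z : ℝ)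
      = Real.pi ^ ((l : ℝ) / 2) / (2 ^ s * (Nat.factorial (s / 2))) *
        ∑ σ : Equiv.Perm (Fin s),
          ∏ k : Fin (s / 2),
            (inner ℝ (b (σ ⟨2 * k, by have := k.isLt; omega⟩))
               (b (σ ⟨2 * k + 1, by have := k.isLt; omega⟩)) : ℝ) := by
  simpa only [finrank_euclideanSpace_fin] using
    integral_exp_neg_norm_sq_mul_prod_inner (Nat.even_iff.2 hs) b
end

section
/- Let ξ₁,…,ξ_s : U → ℝ be functions with Σᵢ ξᵢ² = 1, and let A₁,…,A_s : U → O(n+m) be orthogonal-matrix-valued functions. Then the (n+m)(s+1) × (n+m)(s+1) block matrix A whose (0,0) block is 0, whose (0,j) block is -ξⱼ·Id for j ≥ 1, whose (i,0) block is ξᵢAᵢ for i ≥ 1, and whose (i,j) block for i,j ≥ 1 is (δᵢⱼ - ξᵢξⱼ)Aᵢ, is orthogonal at every point: A(p)ᵀ A(p) = 1. -/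
/-!
Blockwise, the patching matrix is `M (i, j) = K i j • Bᵢ` with `B₀ = 1`, `Bᵢ = Aᵢ` and the scalar
matrix `K = [[0, -ξᵀ], [ξ, 1 - ξ ξᵀ]]`. Since every `Bᵢ` is orthogonal, `Mᵀ M = (Kᵀ K) ⊗ 1`, and
`K` is orthogonal because `ξ` is a unit vector, so that `1 - ξ ξᵀ` is the orthogonal projection
onto `ξ⊥`: the columns of `K` are `(0, ξ)` and `(-ξⱼ, (1 - ξ ξᵀ) eⱼ)`.
-/

open Matrix
open scoped Kronecker

/-- The big block matrix built from a quadratic partition of unity `ξ` and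
orthogonal-matrix-valued functions `Aᵢ`.  Block `(0,0)` is `0`, block `(0,j)`
is `-ξⱼ·Id`, block `(i,0)` is `ξᵢ Aᵢ`, and block `(i,j)` is `(δᵢⱼ - ξᵢξⱼ) Aᵢ`
for `i, j ≥ 1`. -/
def patchingBlockMatrix (n m s k : ℕ) (ξ : Fin s → (Fin k → ℝ) → ℝ)
    (A : Fin s → (Fin k → ℝ) → Matrix (Fin (n + m)) (Fin (n + m)) ℝ)
    (p : Fin k → ℝ) :
    Matrix (Fin (s + 1) × Fin (n + m)) (Fin (s + 1) × Fin (n + m)) ℝ :=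
  Matrix.of fun x y =>
    (if hi : (x.1 : ℕ) = 0 then
        if hj : (y.1 : ℕ) = 0 then (0 : Matrix (Fin (n + m)) (Fin (n + m)) ℝ)
        else -(ξ ⟨(y.1 : ℕ) - 1, by have := y.1.isLt; omega⟩ p) •
          (1 : Matrix (Fin (n + m)) (Fin (n + m)) ℝ)
      else if hj : (y.1 : ℕ) = 0 then
        ξ ⟨(x.1 : ℕ) - 1, by have := x.1.isLt; omega⟩ p •
          A ⟨(x.1 : ℕ) - 1, by have := x.1.isLt; omega⟩ p
      else
        ((if x.1 = y.1 then (1 : ℝ) else 0) -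
            ξ ⟨(x.1 : ℕ) - 1, by have := x.1.isLt; omega⟩ p *
              ξ ⟨(y.1 : ℕ) - 1, by have := y.1.isLt; omega⟩ p) •
          A ⟨(x.1 : ℕ) - 1, by have := x.1.isLt; omega⟩ p) x.2 y.2

namespace Matrix

section Projection

variable {m R : Type*} [Fintype m] [DecidableEq m] [CommRing R] {v : m → R}

theorem vecMul_one_sub_vecMulVec_self (hv : v ⬝ᵥ v = 1) : v ᵥ* (1 - vecMulVec v v) = 0 := by
  rw [vecMul_sub, vecMul_one, vecMul_vecMulVec, hv, one_smul, sub_self]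

theorem transpose_one_sub_vecMulVec_self_mul_self (hv : v ⬝ᵥ v = 1) :
    (1 - vecMulVec v v)ᵀ * (1 - vecMulVec v v) = 1 - vecMulVec v v := by
  rw [transpose_sub, transpose_one, transpose_vecMulVec, sub_mul, one_mul, vecMulVec_mul,
    vecMul_one_sub_vecMulVec_self hv, vecMulVec_zero, sub_zero]

end Projection

variable {ι κ n o R : Type*} [Fintype ι] [Fintype n] [DecidableEq o] [CommRing R]

def scaledBlockMatrix (K : Matrix ι κ R) (B : ι → Matrix n o R) : Matrix (ι × n) (κ × o) R :=
  of fun x y => K x.1 y.1 * B x.1 x.2 y.2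

theorem scaledBlockMatrix_transpose_mul_self (K : Matrix ι κ R) (B : ι → Matrix n o R)
    (hB : ∀ i, (B i)ᵀ * B i = 1) :
    (scaledBlockMatrix K B)ᵀ * scaledBlockMatrix K B = (Kᵀ * K) ⊗ₖ (1 : Matrix o o R) := by
  ext ⟨j, b⟩ ⟨j', b'⟩
  have hBij : ∀ i, ∑ a, B i a b * B i a b' = (1 : Matrix o o R) b b' := fun i => by
    rw [← hB i, mul_apply]; rfl
  simp only [mul_apply, transpose_apply, kronecker_apply, Fintype.sum_prod_type,
    scaledBlockMatrix, of_apply, Finset.sum_mul]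
  refine Finset.sum_congr rfl fun i _ => ?_
  rw [← hBij i, Finset.mul_sum]
  exact Finset.sum_congr rfl fun a _ => by ring

theorem scaledBlockMatrix_transpose_mul_self_eq_one [DecidableEq κ] {K : Matrix ι κ R}
    {B : ι → Matrix n o R} (hK : Kᵀ * K = 1) (hB : ∀ i, (B i)ᵀ * B i = 1) :
    (scaledBlockMatrix K B)ᵀ * scaledBlockMatrix K B = 1 := by
  rw [scaledBlockMatrix_transpose_mul_self K B hB, hK, one_kronecker_one]

end Matrix

section PatchingCoeff

variable {R : Type*} [CommRing R] {s : ℕ}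

def patchingCoeffMatrix (v : Fin s → R) : Matrix (Fin (s + 1)) (Fin (s + 1)) R :=
  of fun i j => Fin.cases (Fin.cases 0 (fun j => -v j) j)
    (fun i => Fin.cases (v i) (fun j => (1 - vecMulVec v v) i j) j) i

variable (v : Fin s → R)

@[simp] theorem patchingCoeffMatrix_zero_zero : patchingCoeffMatrix v 0 0 = 0 := rfl
@[simp] theorem patchingCoeffMatrix_zero_succ (j : Fin s) :
    patchingCoeffMatrix v 0 j.succ = -v j := rfl
@[simp] theorem patchingCoeffMatrix_succ_zero (i : Fin s) :
    patchingCoeffMatrix v i.succ 0 = v i := rfl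
@[simp] theorem patchingCoeffMatrix_succ_succ (i j : Fin s) :
    patchingCoeffMatrix v i.succ j.succ = (1 - vecMulVec v v) i j := rfl

theorem patchingCoeffMatrix_transpose_mul_self {v : Fin s → R} (hv : v ⬝ᵥ v = 1) :
    (patchingCoeffMatrix v)ᵀ * patchingCoeffMatrix v = 1 := by
  have hvP := congrFun (vecMul_one_sub_vecMulVec_self hv)
  have hPP := congrFun₂ (transpose_one_sub_vecMulVec_self_mul_self hv)
  ext j j'
  induction j using Fin.cases with
  | zero =>
    induction j' using Fin.cases with
    | zero => simpa [mul_apply, Fin.sum_univ_succ, dotProduct] using hv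
    | succ j' =>
      rw [one_apply_ne (Fin.succ_ne_zero j').symm]
      simpa [mul_apply, Fin.sum_univ_succ, vecMul, dotProduct] using hvP j'
  | succ j =>
    induction j' using Fin.cases with
    | zero =>
      rw [one_apply_ne (Fin.succ_ne_zero j)]
      simpa [mul_apply, Fin.sum_univ_succ, vecMul, dotProduct, mul_comm] using hvP j
    | succ j' =>
      simp only [mul_apply, transpose_apply, Fin.sum_univ_succ, patchingCoeffMatrix_zero_succ,
        patchingCoeffMatrix_succ_succ] at hPP ⊢
      rw [hPP]
      simp [one_apply, vecMulVec_apply]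

end PatchingCoeff

theorem patchingBlockMatrix_eq_scaledBlockMatrix (n m s k : ℕ) (ξ : Fin s → (Fin k → ℝ) → ℝ)
    (A : Fin s → (Fin k → ℝ) → Matrix (Fin (n + m)) (Fin (n + m)) ℝ) (p : Fin k → ℝ) :
    patchingBlockMatrix n m s k ξ A p =
      scaledBlockMatrix (patchingCoeffMatrix (ξ · p)) (Fin.cons 1 (A · p)) := by
  ext ⟨i, a⟩ ⟨j, b⟩
  induction i using Fin.cases <;> induction j using Fin.cases <;>
    simp [patchingBlockMatrix, scaledBlockMatrix, one_apply, vecMulVec_apply, neg_ite]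

theorem patchingBlockMatrix_orthogonal_general (n m s k : ℕ)
    (U : Set (Fin k → ℝ))
    (ξ : Fin s → (Fin k → ℝ) → ℝ)
    (hξ : ∀ p ∈ U, ∑ i, ξ i p ^ 2 = 1)
    (A : Fin s → (Fin k → ℝ) → Matrix (Fin (n + m)) (Fin (n + m)) ℝ)
    (hAo : ∀ i, ∀ p ∈ U, (A i p)ᵀ * A i p = 1) :
    ∀ p ∈ U,
      (patchingBlockMatrix n m s k ξ A p)ᵀ * patchingBlockMatrix n m s k ξ A p
        = 1 := by
  intro p hp
  have hunit : (ξ · p) ⬝ᵥ (ξ · p) = 1 := by simpa [dotProduct, sq] using hξ p hp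
  rw [patchingBlockMatrix_eq_scaledBlockMatrix]
  refine scaledBlockMatrix_transpose_mul_self_eq_one
    (patchingCoeffMatrix_transpose_mul_self hunit) fun i => ?_
  induction i using Fin.cases with
  | zero => simp
  | succ i => simpa using hAo i p hp

/-- The patching block matrix is orthogonal at every point. -/
theorem patchingBlockMatrix_orthogonal (n m s k : ℕ) (hs : 1 ≤ s)
    (U : Set (Fin k → ℝ))
    (ξ : Fin s → (Fin k → ℝ) → ℝ)
    (hξ : ∀ p ∈ U, ∑ i, ξ i p ^ 2 = 1)
    (A : Fin s → (Fin k → ℝ) → Matrix (Fin (n + m)) (Fin (n + m)) ℝ)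
    (hAo : ∀ i, ∀ p ∈ U, (A i p)ᵀ * A i p = 1) :
    ∀ p ∈ U,
      (patchingBlockMatrix n m s k ξ A p)ᵀ * patchingBlockMatrix n m s k ξ A p
        = 1 :=
  patchingBlockMatrix_orthogonal_general n m s k U ξ hξ A hAo
end

section
/- With A the block matrix built from a quadratic partition of unity ξ₁,…,ξ_s and differentiable maps A₁,…,A_s into O(n+m) as above, the top-left n×n block of A⁻¹ D_v A satisfies (A⁻¹ D_v A)_{oo} = Σᵢ ξᵢ² (Aᵢ⁻¹ D_v Aᵢ)_{oo} at every point and for every tangent vector v. -/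
open Matrix

/-!
The patching matrix factors as `diag(1, A₁, …, A_s) * (R ⊗ₖ 1)` with the scalar matrix
`R = [[0, -ξᵀ], [ξ, 1 - ξ ξᵀ]]`, which is orthogonal since `|ξ| = 1`; so the patching matrix is
orthogonal and its inverse is its transpose. In the top-left block of `Pᵀ D_v P` the product rule
leaves `∑ ξᵢ² Aᵢᵀ D_v Aᵢ` plus `(∑ ξᵢ D_v ξᵢ) • 1`, and `∑ ξᵢ D_v ξᵢ = ½ D_v ∑ ξᵢ² = 0`.
-/

open scoped Kronecker Topology

namespace Matrix

variable {ι κ α : Type*} [Fintype ι] [Fintype κ] [DecidableEq κ]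

/-- `diag(B) * (R ⊗ₖ 1)`: the `(t, l)` block is `R t l • B t`. -/
def blockSMul [Mul α] (R : Matrix ι ι α) (B : ι → Matrix κ κ α) : Matrix (ι × κ) (ι × κ) α :=
  of fun x y => R x.1 y.1 * B x.1 x.2 y.2

theorem blockSMul_transpose_mul_self [CommSemiring α] (R : Matrix ι ι α)
    {B : ι → Matrix κ κ α} (hB : ∀ t, (B t)ᵀ * B t = 1) :
    (blockSMul R B)ᵀ * blockSMul R B = (Rᵀ * R) ⊗ₖ 1 := by
  ext ⟨l, a⟩ ⟨j, b⟩
  have hBab t : ∑ z, B t z a * B t z b = (1 : Matrix κ κ α) a b := by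
    rw [← hB t, mul_apply]; rfl
  simp only [mul_apply, Fintype.sum_prod_type, kronecker_apply, transpose_apply, blockSMul,
    of_apply, Finset.sum_mul]
  refine Finset.sum_congr rfl fun t _ => ?_
  rw [← hBab, Finset.mul_sum]
  exact Finset.sum_congr rfl fun z _ => by ring

theorem transpose_mul_fderiv_blockSMul_apply {E : Type*} [NormedAddCommGroup E]
    [NormedSpace ℝ E] {R : E → Matrix ι ι ℝ} {B : E → ι → Matrix κ κ ℝ} {p : E} {l' : ι}
    (hR : ∀ t, DifferentiableAt ℝ (fun q => R q t l') p)
    (hB : ∀ t a b, DifferentiableAt ℝ (fun q => B q t a b) p)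
    (hBo : ∀ t, (B p t)ᵀ * B p t = 1) (v : E) (l : ι) (a b : κ) :
    ((blockSMul (R p) (B p))ᵀ *
        of fun x y => fderiv ℝ (fun q => blockSMul (R q) (B q) x y) p v) (l, a) (l', b) =
      ∑ t, R p t l * R p t l' *
          ((B p t)ᵀ * of fun x y => fderiv ℝ (fun q => B q t x y) p v) a b +
        (∑ t, R p t l * fderiv ℝ (fun q => R q t l') p v) * (1 : Matrix κ κ ℝ) a b := by
  have hBab t : ∑ z, B p t z a * B p t z b = (1 : Matrix κ κ ℝ) a b := by
    rw [← hBo t, mul_apply]; rfl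
  have hprod t z : fderiv ℝ (fun q => R q t l' * B q t z b) p v =
      R p t l' * fderiv ℝ (fun q => B q t z b) p v +
        B p t z b * fderiv ℝ (fun q => R q t l') p v := by
    rw [fderiv_fun_mul (hR t) (hB t z b)]
    simp
  simp only [mul_apply, Fintype.sum_prod_type, transpose_apply, blockSMul, of_apply, hprod,
    Finset.sum_mul, ← Finset.sum_add_distrib, Finset.mul_sum]
  refine Finset.sum_congr rfl fun t _ => ?_
  rw [← hBab t, Finset.mul_sum, ← Finset.sum_add_distrib]
  exact Finset.sum_congr rfl fun z _ => by ring

theorem vecCons_one_transpose_mul_self [CommSemiring α] {s : ℕ} {B : Fin s → Matrix κ κ α}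
    (hB : ∀ i, (B i)ᵀ * B i = 1) (t : Fin (s + 1)) : (vecCons 1 B t)ᵀ * vecCons 1 B t = 1 := by
  induction t using Fin.cases <;> simp [hB]

end Matrix

/-- The scalar pattern `[[0, -ξᵀ], [ξ, 1 - ξ ξᵀ]]` of the patching matrix. -/
def patchingCoeff {s : ℕ} {α : Type*} [Ring α] (ξ : Fin s → α) :
    Matrix (Fin (s + 1)) (Fin (s + 1)) α :=
  of <| vecCons (vecCons 0 (-ξ)) fun i =>
    vecCons (ξ i) fun j => (if i = j then 1 else 0) - ξ i * ξ j

theorem patchingCoeff_transpose_mul_self {s : ℕ} {α : Type*} [CommRing α] {ξ : Fin s → α}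
    (hξ : ∑ i, ξ i ^ 2 = 1) : (patchingCoeff ξ)ᵀ * patchingCoeff ξ = 1 := by
  have hξc c : ∑ t, ξ t * ξ t * c = c := by
    simp_rw [← sq, ← Finset.sum_mul, hξ, one_mul]
  ext l j
  induction l using Fin.cases with
  | zero => induction j using Fin.cases with
    | zero => simpa [patchingCoeff, mul_apply, Fin.sum_univ_succ, ← sq] using hξ
    | succ j =>
      simp [patchingCoeff, mul_apply, Fin.sum_univ_succ, one_apply, mul_sub,
        Finset.sum_sub_distrib, ← mul_assoc, hξc, (Fin.succ_ne_zero j).symm]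
  | succ l => induction j using Fin.cases with
    | zero =>
      simp [patchingCoeff, mul_apply, Fin.sum_univ_succ, one_apply, sub_mul,
        Finset.sum_sub_distrib, mul_right_comm _ (ξ l), hξc]
    | succ j =>
      have hexpand t :
          ((if t = l then 1 else 0) - ξ t * ξ l) * ((if t = j then 1 else 0) - ξ t * ξ j) =
            (if t = l then (if t = j then 1 else 0) else 0) - (if t = l then ξ t * ξ j else 0)
              - (if t = j then ξ t * ξ l else 0) + ξ t * ξ t * (ξ l * ξ j) := by
        split_ifs <;> ring
      simp only [patchingCoeff, transpose_apply, mul_apply, Fin.sum_univ_succ, of_apply,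
        cons_val_zero, cons_val_succ, Pi.neg_apply, neg_mul_neg, hexpand,
        Finset.sum_add_distrib, Finset.sum_sub_distrib, hξc, Finset.sum_ite_eq',
        Finset.mem_univ, if_true, one_apply, Fin.succ_inj]
      split_ifs <;> ring

theorem sum_mul_fderiv_eq_zero_of_sum_sq_eq_one {ι E : Type*} [Fintype ι]
    [NormedAddCommGroup E] [NormedSpace ℝ E] {f : ι → E → ℝ} {p : E}
    (hf : ∀ i, DifferentiableAt ℝ (f i) p) (h : ∀ᶠ q in 𝓝 p, ∑ i, f i q ^ 2 = 1) (v : E) :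
    ∑ i, f i p * fderiv ℝ (f i) p v = 0 := by
  have hsum := HasFDerivAt.fun_sum (u := Finset.univ) fun i _ => (hf i).hasFDerivAt.pow 2
  have hconst : HasFDerivAt (fun q => ∑ i, f i q ^ 2) (0 : E →L[ℝ] ℝ) p :=
    (hasFDerivAt_const 1 p).congr_of_eventuallyEq h
  have := congr($(hsum.unique hconst) v)
  simpa [mul_assoc, ← Finset.mul_sum] using this

section

variable {n m s k : ℕ} {ξ : Fin s → (Fin k → ℝ) → ℝ}
  {A : Fin s → (Fin k → ℝ) → Matrix (Fin (n + m)) (Fin (n + m)) ℝ}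

theorem patchingBlockMatrix_eq_blockSMul (p : Fin k → ℝ) :
    patchingBlockMatrix n m s k ξ A p =
      blockSMul (patchingCoeff fun i => ξ i p) (vecCons 1 fun i => A i p) := by
  ext ⟨t, a⟩ ⟨l, b⟩
  induction t using Fin.cases <;> induction l using Fin.cases <;>
    simp [patchingBlockMatrix, blockSMul, patchingCoeff, Fin.val_succ, one_apply, Fin.succ_inj,
      neg_ite]

theorem patchingBlockMatrix_transpose_mul_self {p : Fin k → ℝ} (hξ : ∑ i, ξ i p ^ 2 = 1)
    (hA : ∀ i, (A i p)ᵀ * A i p = 1) :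
    (patchingBlockMatrix n m s k ξ A p)ᵀ * patchingBlockMatrix n m s k ξ A p = 1 := by
  rw [patchingBlockMatrix_eq_blockSMul,
    blockSMul_transpose_mul_self _ (vecCons_one_transpose_mul_self hA),
    patchingCoeff_transpose_mul_self hξ, one_kronecker_one]

end

theorem patchingBlockMatrix_maurer_cartan_oo_general (n m s k : ℕ)
    (U : Set (Fin k → ℝ)) (hU : IsOpen U)
    (ξ : Fin s → (Fin k → ℝ) → ℝ)
    (hξd : ∀ i, DifferentiableOn ℝ (ξ i) U)
    (hξ : ∀ p ∈ U, ∑ i, ξ i p ^ 2 = 1)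
    (A : Fin s → (Fin k → ℝ) → Matrix (Fin (n + m)) (Fin (n + m)) ℝ)
    (hAd : ∀ i a b, DifferentiableOn ℝ (fun p => A i p a b) U)
    (hAo : ∀ i, ∀ p ∈ U, (A i p)ᵀ * A i p = 1) :
    ∀ p ∈ U, ∀ v : Fin k → ℝ, ∀ a b : Fin n,
      ((patchingBlockMatrix n m s k ξ A p)⁻¹ *
            Matrix.of fun x y =>
              fderiv ℝ (fun q => patchingBlockMatrix n m s k ξ A q x y) p v)
          ((0 : Fin (s + 1)), Fin.castAdd m a) ((0 : Fin (s + 1)), Fin.castAdd m b)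
        = ∑ i : Fin s,
            ξ i p ^ 2 *
              (((A i p)⁻¹ *
                    Matrix.of fun α β => fderiv ℝ (fun q => A i q α β) p v)
                (Fin.castAdd m a) (Fin.castAdd m b)) := by
  intro p hp v a b
  have hnhds := hU.mem_nhds hp
  have hξp i : DifferentiableAt ℝ (ξ i) p := (hξd i).differentiableAt hnhds
  have hR t : DifferentiableAt ℝ (fun q => patchingCoeff (fun i => ξ i q) t 0) p := by
    induction t using Fin.cases <;> simp [patchingCoeff, hξp]
  have hB t a b : DifferentiableAt ℝ (fun q => vecCons 1 (fun i => A i q) t a b) p := by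
    induction t using Fin.cases with
    | zero => simp
    | succ i => simpa using (hAd i a b).differentiableAt hnhds
  rw [inv_eq_left_inv (patchingBlockMatrix_transpose_mul_self (hξ p hp) (hAo · p hp))]
  simp only [patchingBlockMatrix_eq_blockSMul]
  rw [transpose_mul_fderiv_blockSMul_apply hR hB (vecCons_one_transpose_mul_self (hAo · p hp))]
  simp [patchingCoeff, Fin.sum_univ_succ, inv_eq_left_inv (hAo _ p hp), sq,
    sum_mul_fderiv_eq_zero_of_sum_sq_eq_one hξp (Filter.eventually_of_mem hnhds hξ)]

/-- The top-left `n × n` block of `A⁻¹ D_v A` for the patching block matrix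
is the `ξᵢ²`-weighted combination of those of the `Aᵢ`. -/
theorem patchingBlockMatrix_maurer_cartan_oo (n m s k : ℕ) (hs : 1 ≤ s)
    (U : Set (Fin k → ℝ)) (hU : IsOpen U)
    (ξ : Fin s → (Fin k → ℝ) → ℝ)
    (hξd : ∀ i, DifferentiableOn ℝ (ξ i) U)
    (hξ : ∀ p ∈ U, ∑ i, ξ i p ^ 2 = 1)
    (A : Fin s → (Fin k → ℝ) → Matrix (Fin (n + m)) (Fin (n + m)) ℝ)
    (hAd : ∀ i a b, DifferentiableOn ℝ (fun p => A i p a b) U)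
    (hAo : ∀ i, ∀ p ∈ U, (A i p)ᵀ * A i p = 1) :
    ∀ p ∈ U, ∀ v : Fin k → ℝ, ∀ a b : Fin n,
      ((patchingBlockMatrix n m s k ξ A p)⁻¹ *
            Matrix.of fun x y =>
              fderiv ℝ (fun q => patchingBlockMatrix n m s k ξ A q x y) p v)
          ((0 : Fin (s + 1)), Fin.castAdd m a) ((0 : Fin (s + 1)), Fin.castAdd m b)
        = ∑ i : Fin s,
            ξ i p ^ 2 *
              (((A i p)⁻¹ *
                    Matrix.of fun α β => fderiv ℝ (fun q => A i q α β) p v)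
                (Fin.castAdd m a) (Fin.castAdd m b)) :=
  patchingBlockMatrix_maurer_cartan_oo_general n m s k U hU ξ hξd hξ A hAd hAo
end

section
/- For A : U → O(n+m) differentiable, define Ω_{v,w}(p) = -¼(B_v - Q₀B_vQ₀)(B_w - Q₀B_wQ₀)(p) where B_v = A⁻¹D_vA. Then the top-left n×n block of Ω_{v,w} equals -(B_v)_{oh}(B_w)_{ho}, and using orthogonality (B_w)_{ho} = -((B_w)_{oh})ᵀ, this block equals (B_v)_{oh}·((B_w)_{oh})ᵀ. -/
open Matrix

/-- The Maurer-Cartan matrix `B_v = A⁻¹ D_v A`. -/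
noncomputable def maurerCartan (n m k : ℕ)
    (A : (Fin k → ℝ) → Matrix (Fin (n + m)) (Fin (n + m)) ℝ)
    (p v : Fin k → ℝ) : Matrix (Fin (n + m)) (Fin (n + m)) ℝ :=
  (A p)⁻¹ * Matrix.of fun i j => fderiv ℝ (fun q => A q i j) p v

/-- The diagonal involution `Q₀ = diag(-1ₙ, 1ₘ)`. -/
def diagInvolution (n m : ℕ) : Matrix (Fin (n + m)) (Fin (n + m)) ℝ :=
  Matrix.diagonal fun i : Fin (n + m) => if (i : ℕ) < n then (-1 : ℝ) else 1

/-- Top-left `n × n` block. -/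
def blockOO {n m : ℕ} (M : Matrix (Fin (n + m)) (Fin (n + m)) ℝ) :
    Matrix (Fin n) (Fin n) ℝ :=
  Matrix.of fun a b => M (Fin.castAdd m a) (Fin.castAdd m b)

/-- Top-right `n × m` block. -/
def blockOH {n m : ℕ} (M : Matrix (Fin (n + m)) (Fin (n + m)) ℝ) :
    Matrix (Fin n) (Fin m) ℝ :=
  Matrix.of fun a b => M (Fin.castAdd m a) (Fin.natAdd n b)

/-- Bottom-left `m × n` block. -/
def blockHO {n m : ℕ} (M : Matrix (Fin (n + m)) (Fin (n + m)) ℝ) :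
    Matrix (Fin m) (Fin n) ℝ :=
  Matrix.of fun a b => M (Fin.natAdd n a) (Fin.castAdd m b)

/-!
Differentiating `Aᵀ A = 1` in the direction `v` shows that `B_v = Aᵀ D_v A` is skew-symmetric,
which gives `(B_w)_{ho} = -((B_w)_{oh})ᵀ`. Conjugation by `Q₀` negates the off-diagonal blocks and
fixes the diagonal ones, so `B - Q₀ B Q₀` is twice the off-diagonal part of `B`, and the top-left
block of a product of two such matrices is `4 (B_v)_{oh} (B_w)_{ho}`.
-/

section SkewSymmetric

variable {ι E : Type*} [Fintype ι] [NormedAddCommGroup E] [NormedSpace ℝ E]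

noncomputable def Matrix.entrywiseFDeriv (A : E → Matrix ι ι ℝ) (p v : E) : Matrix ι ι ℝ :=
  Matrix.of fun i j => fderiv ℝ (fun q => A q i j) p v

theorem fderiv_transpose_mul_self_apply {A : E → Matrix ι ι ℝ} {p : E}
    (hA : ∀ i j, DifferentiableAt ℝ (fun q => A q i j) p) (v : E) (i j : ι) :
    fderiv ℝ (fun q => ((A q)ᵀ * A q) i j) p v =
      ((A p)ᵀ * Matrix.entrywiseFDeriv A p v) i j +
        ((A p)ᵀ * Matrix.entrywiseFDeriv A p v) j i := by
  simp only [Matrix.mul_apply, Matrix.transpose_apply, Matrix.entrywiseFDeriv, Matrix.of_apply]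
  rw [fderiv_fun_sum (A := fun l q => A q l i * A q l j) fun l _ => (hA l i).fun_mul (hA l j),
    _root_.sum_apply, ← Finset.sum_add_distrib]
  refine Finset.sum_congr rfl fun l _ => ?_
  rw [fderiv_fun_mul (hA l i) (hA l j)]
  simp only [_root_.add_apply, _root_.smul_apply, smul_eq_mul]

theorem transpose_transpose_mul_entrywiseFDeriv [DecidableEq ι] {A : E → Matrix ι ι ℝ} {p : E}
    (hA : ∀ i j, DifferentiableAt ℝ (fun q => A q i j) p)
    (horth : ∀ᶠ q in nhds p, (A q)ᵀ * A q = 1) (v : E) :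
    ((A p)ᵀ * Matrix.entrywiseFDeriv A p v)ᵀ = -((A p)ᵀ * Matrix.entrywiseFDeriv A p v) := by
  ext i j
  have hconst : fderiv ℝ (fun q => ((A q)ᵀ * A q) j i) p = 0 := by
    have hentry : (fun q => ((A q)ᵀ * A q) j i) =ᶠ[nhds p] fun _ => (1 : Matrix ι ι ℝ) j i :=
      horth.mono fun q hq => congrFun (congrFun hq j) i
    rw [hentry.fderiv_eq]
    exact fderiv_const_apply _
  have h := fderiv_transpose_mul_self_apply hA v j i
  rw [hconst, _root_.zero_apply] at h
  rw [Matrix.transpose_apply, Matrix.neg_apply]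
  linarith

end SkewSymmetric

section Blocks

variable {n m : ℕ}

theorem blockHO_eq_neg_transpose_blockOH {M : Matrix (Fin (n + m)) (Fin (n + m)) ℝ}
    (hM : Mᵀ = -M) : blockHO M = -(blockOH M)ᵀ := by
  ext a b
  simpa [blockHO, blockOH, neg_eq_iff_eq_neg] using
    congrFun (congrFun hM (Fin.castAdd m b)) (Fin.natAdd n a)

theorem sub_conj_diagInvolution_apply (M : Matrix (Fin (n + m)) (Fin (n + m)) ℝ)
    (i j : Fin (n + m)) :
    (M - diagInvolution n m * M * diagInvolution n m) i j =
      (1 - (if (i : ℕ) < n then (-1 : ℝ) else 1) * (if (j : ℕ) < n then -1 else 1)) * M i j := by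
  simp only [Matrix.sub_apply, diagInvolution, Matrix.mul_diagonal, Matrix.diagonal_mul]
  ring

theorem sub_conj_diagInvolution_castAdd_castAdd (M : Matrix (Fin (n + m)) (Fin (n + m)) ℝ)
    (a b : Fin n) :
    (M - diagInvolution n m * M * diagInvolution n m) (Fin.castAdd m a) (Fin.castAdd m b) = 0 := by
  rw [sub_conj_diagInvolution_apply]
  norm_num

theorem sub_conj_diagInvolution_castAdd_natAdd (M : Matrix (Fin (n + m)) (Fin (n + m)) ℝ)
    (a : Fin n) (c : Fin m) :
    (M - diagInvolution n m * M * diagInvolution n m) (Fin.castAdd m a) (Fin.natAdd n c) =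
      2 * M (Fin.castAdd m a) (Fin.natAdd n c) := by
  rw [sub_conj_diagInvolution_apply]
  norm_num

theorem sub_conj_diagInvolution_natAdd_castAdd (M : Matrix (Fin (n + m)) (Fin (n + m)) ℝ)
    (c : Fin m) (a : Fin n) :
    (M - diagInvolution n m * M * diagInvolution n m) (Fin.natAdd n c) (Fin.castAdd m a) =
      2 * M (Fin.natAdd n c) (Fin.castAdd m a) := by
  rw [sub_conj_diagInvolution_apply]
  norm_num

theorem blockOO_smul_sub_conj_mul_sub_conj (r : ℝ) (M M' : Matrix (Fin (n + m)) (Fin (n + m)) ℝ) :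
    blockOO (r • ((M - diagInvolution n m * M * diagInvolution n m) *
        (M' - diagInvolution n m * M' * diagInvolution n m))) =
      (4 * r) • (blockOH M * blockHO M') := by
  ext a b
  simp only [blockOO, blockOH, blockHO, Matrix.of_apply, Matrix.smul_apply, Matrix.mul_apply,
    Fin.sum_univ_add, sub_conj_diagInvolution_castAdd_castAdd,
    sub_conj_diagInvolution_castAdd_natAdd, sub_conj_diagInvolution_natAdd_castAdd, zero_mul,
    Finset.sum_const_zero, zero_add, smul_eq_mul, Finset.mul_sum]
  exact Finset.sum_congr rfl fun c _ => by ring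

end Blocks

theorem maurerCartan_eq_transpose_mul {n m k : ℕ}
    {A : (Fin k → ℝ) → Matrix (Fin (n + m)) (Fin (n + m)) ℝ} {p : Fin k → ℝ}
    (hp : (A p)ᵀ * A p = 1) (v : Fin k → ℝ) :
    maurerCartan n m k A p v = (A p)ᵀ * Matrix.entrywiseFDeriv A p v := by
  rw [maurerCartan, Matrix.inv_eq_left_inv hp, Matrix.entrywiseFDeriv]

/-- The top-left block of the curvature
`Ω_{v,w} = -¼ (B_v - Q₀ B_v Q₀)(B_w - Q₀ B_w Q₀)` of the constrained
connection equals `-(B_v)_{oh} (B_w)_{ho} = (B_v)_{oh} ((B_w)_{oh})ᵀ`. -/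
theorem constrained_curvature_oo_block (n m k : ℕ)
    (U : Set (Fin k → ℝ)) (hU : IsOpen U)
    (A : (Fin k → ℝ) → Matrix (Fin (n + m)) (Fin (n + m)) ℝ)
    (hAd : ∀ i j, DifferentiableOn ℝ (fun p => A p i j) U)
    (hAo : ∀ p ∈ U, (A p)ᵀ * A p = 1) :
    ∀ p ∈ U, ∀ v w : Fin k → ℝ,
      blockOO ((-(1 / 4) : ℝ) •
          ((maurerCartan n m k A p v -
              diagInvolution n m * maurerCartan n m k A p v * diagInvolution n m) *
            (maurerCartan n m k A p w -
              diagInvolution n m * maurerCartan n m k A p w * diagInvolution n m)))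
        = -(blockOH (maurerCartan n m k A p v) * blockHO (maurerCartan n m k A p w)) ∧
      blockHO (maurerCartan n m k A p w) = -(blockOH (maurerCartan n m k A p w))ᵀ ∧
      blockOO ((-(1 / 4) : ℝ) •
          ((maurerCartan n m k A p v -
              diagInvolution n m * maurerCartan n m k A p v * diagInvolution n m) *
            (maurerCartan n m k A p w -
              diagInvolution n m * maurerCartan n m k A p w * diagInvolution n m)))
        = blockOH (maurerCartan n m k A p v) * (blockOH (maurerCartan n m k A p w))ᵀ := by
  intro p hp v w
  have hskew : (maurerCartan n m k A p w)ᵀ = -maurerCartan n m k A p w := by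
    rw [maurerCartan_eq_transpose_mul (hAo p hp)]
    exact transpose_transpose_mul_entrywiseFDeriv
      (fun i j => (hAd i j p hp).differentiableAt (hU.mem_nhds hp))
      (Filter.eventually_of_mem (hU.mem_nhds hp) hAo) w
  have hoo := blockOO_smul_sub_conj_mul_sub_conj (-(1 / 4))
    (maurerCartan n m k A p v) (maurerCartan n m k A p w)
  rw [show (4 : ℝ) * -(1 / 4) = -1 by norm_num, neg_one_smul] at hoo
  have hho := blockHO_eq_neg_transpose_blockOH hskew
  exact ⟨hoo, hho, by rw [hoo, hho, Matrix.mul_neg, neg_neg]⟩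
end
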